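/- arXiv:2211.13180 — 5 statements merged into one kernel-verified Lean document; each statement's English description precedes it below -/
import Mathlib

section
/- For any real numbers $p \in [2,3)$ and $s$ with $|s| < 1$, one has $\tfrac12\big((1+s)^p + (1-s)^p\big) \le 1 + \tfrac{p}{2}(p-1)s^2\big(1 + \tfrac{1}{12}(p-2)(p-3)s^2\big)$. -/
/-!
Write `S_r(x) = (1+x)^r + (1-x)^r` and `D_r(x) = (1+x)^r - (1-x)^r`, so that `S_r' = r D_{r-1}`
and `D_r' = r S_{r-1}`. For `r ≤ 0` we have `S_r ≥ 2`, since `(1+x)^r (1-x)^r = (1-x^2)^r ≥ 1`.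
Integrating four times from `0`, with the signs of `r, r-1, r-2, r-3` controlling the direction
of each inequality, gives for `x ∈ [0,1)` the truncated Taylor bounds
`D_{r-3}(x) ≤ 2(r-3)x`, `S_{r-2}(x) ≤ 2 + (r-2)(r-3)x^2`, …, up to
`S_r(x) ≤ 2 + r(r-1)x^2 + r(r-1)(r-2)(r-3)x^4/12` for `r ∈ [2,3]`.
Evenness of `S_r` handles `s < 0`.
-/

open Real Set

lemma le_of_hasDerivAt_le_of_mem_Ico {f g f' g' : ℝ → ℝ} {a b : ℝ} (ha : f a ≤ g a)
    (hf : ∀ x ∈ Ico a b, HasDerivAt f (f' x) x) (hg : ∀ x ∈ Ico a b, HasDerivAt g (g' x) x)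
    (hle : ∀ x ∈ Ico a b, f' x ≤ g' x) : ∀ x ∈ Ico a b, f x ≤ g x := by
  intro x hx
  have hsub : Icc a x ⊆ Ico a b := fun y hy => ⟨hy.1, hy.2.trans_lt hx.2⟩
  refine image_le_of_deriv_right_le_deriv_boundary
    (fun y hy => (hf y (hsub hy)).continuousAt.continuousWithinAt)
    (fun y hy => (hf y (hsub (Ico_subset_Icc_self hy))).hasDerivWithinAt) ha
    (fun y hy => (hg y (hsub hy)).continuousAt.continuousWithinAt)
    (fun y hy => (hg y (hsub (Ico_subset_Icc_self hy))).hasDerivWithinAt)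
    (fun y hy => hle y (hsub (Ico_subset_Icc_self hy))) ⟨hx.1, le_rfl⟩

noncomputable def powSum (r x : ℝ) : ℝ := (1 + x) ^ r + (1 - x) ^ r

noncomputable def powDiff (r x : ℝ) : ℝ := (1 + x) ^ r - (1 - x) ^ r

lemma powSum_neg (r x : ℝ) : powSum r (-x) = powSum r x := by
  rw [powSum, powSum, sub_neg_eq_add, ← sub_eq_add_neg, add_comm]

@[simp] lemma powSum_zero_right (r : ℝ) : powSum r 0 = 2 := by
  norm_num [powSum]

@[simp] lemma powDiff_zero_right (r : ℝ) : powDiff r 0 = 0 := by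
  simp [powDiff]

lemma hasDerivAt_powSum (r : ℝ) {x : ℝ} (hx : x ∈ Ioo (-1) 1) :
    HasDerivAt (powSum r) (r * powDiff (r - 1) x) x := by
  have hplus := ((hasDerivAt_id' x).const_add 1).rpow_const (p := r) (Or.inl (by linarith [hx.1]))
  have hminus := ((hasDerivAt_id' x).const_sub 1).rpow_const (p := r) (Or.inl (by linarith [hx.2]))
  exact (hplus.add hminus).congr_deriv (by simp only [powDiff]; ring)

lemma hasDerivAt_powDiff (r : ℝ) {x : ℝ} (hx : x ∈ Ioo (-1) 1) :
    HasDerivAt (powDiff r) (r * powSum (r - 1) x) x := by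
  have hplus := ((hasDerivAt_id' x).const_add 1).rpow_const (p := r) (Or.inl (by linarith [hx.1]))
  have hminus := ((hasDerivAt_id' x).const_sub 1).rpow_const (p := r) (Or.inl (by linarith [hx.2]))
  exact (hplus.sub hminus).congr_deriv (by simp only [powSum]; ring)

lemma two_le_powSum {r x : ℝ} (hr : r ≤ 0) (hx : x ∈ Ioo (-1) 1) : 2 ≤ powSum r x := by
  have hplus : 0 < 1 + x := by linarith [hx.1]
  have hminus : 0 < 1 - x := by linarith [hx.2]
  have hprod : 1 ≤ (1 + x) ^ r * (1 - x) ^ r := by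
    rw [← mul_rpow hplus.le hminus.le]
    exact one_le_rpow_of_pos_of_le_one_of_nonpos (mul_pos hplus hminus)
      (by nlinarith [sq_nonneg x]) hr
  unfold powSum
  nlinarith [sq_nonneg ((1 + x) ^ r - (1 - x) ^ r), rpow_pos_of_pos hplus r,
    rpow_pos_of_pos hminus r]

lemma Ico_zero_one_subset_Ioo : Ico (0 : ℝ) 1 ⊆ Ioo (-1) 1 :=
  Ico_subset_Ioo_left (by norm_num)

lemma powDiff_le_of_nonpos {r : ℝ} (hr : r ≤ 0) : ∀ x ∈ Ico (0 : ℝ) 1, powDiff r x ≤ 2 * r * x := by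
  refine le_of_hasDerivAt_le_of_mem_Ico (by simp)
    (fun x hx => hasDerivAt_powDiff r (Ico_zero_one_subset_Ioo hx))
    (fun x _ => (hasDerivAt_id' x).const_mul (2 * r)) fun x hx => ?_
  have := two_le_powSum (by linarith : r - 1 ≤ 0) (Ico_zero_one_subset_Ioo hx)
  nlinarith

lemma powSum_le_of_mem_Icc_zero_one {r : ℝ} (hr : r ∈ Icc 0 1) :
    ∀ x ∈ Ico (0 : ℝ) 1, powSum r x ≤ 2 + r * (r - 1) * x ^ 2 := by
  refine le_of_hasDerivAt_le_of_mem_Ico (g' := fun x => 2 * r * (r - 1) * x) (by simp)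
    (fun x hx => hasDerivAt_powSum r (Ico_zero_one_subset_Ioo hx))
    (fun x _ => (((hasDerivAt_pow 2 x).const_mul (r * (r - 1))).const_add 2).congr_deriv
      (by norm_num; ring)) fun x hx => ?_
  have := powDiff_le_of_nonpos (by linarith [hr.2] : r - 1 ≤ 0) x hx
  nlinarith [hr.1]

lemma powDiff_le_of_mem_Icc_one_two {r : ℝ} (hr : r ∈ Icc 1 2) :
    ∀ x ∈ Ico (0 : ℝ) 1, powDiff r x ≤ 2 * r * x + r * (r - 1) * (r - 2) / 3 * x ^ 3 := by
  refine le_of_hasDerivAt_le_of_mem_Ico (g' := fun x => 2 * r + r * (r - 1) * (r - 2) * x ^ 2)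
    (by simp) (fun x hx => hasDerivAt_powDiff r (Ico_zero_one_subset_Ioo hx))
    (fun x _ => (((hasDerivAt_id' x).const_mul (2 * r)).add
      ((hasDerivAt_pow 3 x).const_mul (r * (r - 1) * (r - 2) / 3))).congr_deriv
      (by norm_num; ring)) fun x hx => ?_
  have := powSum_le_of_mem_Icc_zero_one (r := r - 1) ⟨by linarith [hr.1], by linarith [hr.2]⟩ x hx
  nlinarith [mul_le_mul_of_nonneg_left this (by linarith [hr.1] : 0 ≤ r)]

lemma powSum_le_of_mem_Icc_two_three {r : ℝ} (hr : r ∈ Icc 2 3) :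
    ∀ x ∈ Ico (0 : ℝ) 1,
      powSum r x ≤ 2 + r * (r - 1) * x ^ 2 + r * (r - 1) * (r - 2) * (r - 3) / 12 * x ^ 4 := by
  refine le_of_hasDerivAt_le_of_mem_Ico
    (g' := fun x => 2 * r * (r - 1) * x + r * (r - 1) * (r - 2) * (r - 3) / 3 * x ^ 3) (by simp)
    (fun x hx => hasDerivAt_powSum r (Ico_zero_one_subset_Ioo hx))
    (fun x _ => ((((hasDerivAt_pow 2 x).const_mul (r * (r - 1))).const_add 2).add
      ((hasDerivAt_pow 4 x).const_mul (r * (r - 1) * (r - 2) * (r - 3) / 12))).congr_deriv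
      (by norm_num; ring)) fun x hx => ?_
  have := powDiff_le_of_mem_Icc_one_two (r := r - 1) ⟨by linarith [hr.1], by linarith [hr.2]⟩ x hx
  nlinarith [mul_le_mul_of_nonneg_left this (by linarith [hr.1] : 0 ≤ r)]

theorem stmt_0 (p s : ℝ) (hp2 : 2 ≤ p) (hp3 : p < 3) (hs : |s| < 1) :
    (1 / 2) * ((1 + s) ^ p + (1 - s) ^ p) ≤
      1 + (p / 2) * (p - 1) * s ^ 2 * (1 + (1 / 12) * (p - 2) * (p - 3) * s ^ 2) := by
  have hbound := powSum_le_of_mem_Icc_two_three ⟨hp2, hp3.le⟩ |s| ⟨abs_nonneg s, hs⟩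
  have heven : powSum p |s| = powSum p s := by
    rcases abs_choice s with h | h <;> simp only [h, powSum_neg]
  rw [heven, Even.pow_abs ⟨1, rfl⟩, Even.pow_abs ⟨2, rfl⟩, powSum] at hbound
  linear_combination (1 / 2) * hbound
end

section
/- Let $d \ge 1$ be an integer, $\lambda_j = j(j+d-1)$, $z_j = j + d/2$, and let $\eta_j$ be defined by $\eta_1 = 2/d$, $\eta_{j+1} = \eta_j + \tfrac{2}{d+2j}$. Then $z_j^2 > \tfrac{\lambda_j}{2\eta_j}$ for all $j \ge 1$, and consequently the sequence $j \mapsto \eta_j/\lambda_j$ is strictly decreasing for $j \ge 1$. -/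
lemma aux_step (d N : ℝ) (hd : 1 ≤ d) (hN : 1 ≤ N) :
    ((N+1)*(N+1+d-1)) / (2*((N+1)+d/2)^2) ≤ (N*(N+d-1))/(2*(N+d/2)^2) + 2/(d+2*N) := by
  have h1 : 0 < d + 2*N := by linarith
  have h2 : 0 < 2*(N+d/2)^2 := by positivity
  have h3 : 0 < 2*((N+1)+d/2)^2 := by positivity
  rw [div_add_div _ _ (ne_of_gt h2) (ne_of_gt h1), div_le_div_iff₀ h3 (by positivity)]
  have hN0 : (0:ℝ) ≤ N := by linarith
  have hd0 : (0:ℝ) ≤ d := by linarith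
  nlinarith [sq_nonneg (d+2*N), sq_nonneg (d*N), mul_pos h1 h1, sq_nonneg N, sq_nonneg d,
    mul_pos (mul_pos h1 h1) h1, sq_nonneg (d*N - 1), mul_nonneg (sq_nonneg d) hN0,
    mul_nonneg (mul_nonneg hd0 hN0) hN0, mul_nonneg (mul_nonneg hd0 hd0) hN0]

theorem stmt_4 (d : ℕ) (hd : 1 ≤ d) (η : ℕ → ℝ)
    (hη1 : η 1 = 2 / d)
    (hrec : ∀ j : ℕ, 1 ≤ j → η (j + 1) = η j + 2 / (d + 2 * j)) :
    (∀ j : ℕ, 1 ≤ j → ((j : ℝ) + d / 2) ^ 2 > (j * (j + d - 1)) / (2 * η j)) ∧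
    (∀ j : ℕ, 1 ≤ j →
      η (j + 1) / ((j + 1) * ((j : ℝ) + 1 + d - 1)) < η j / (j * ((j : ℝ) + d - 1))) := by
  have hd' : (1:ℝ) ≤ (d:ℝ) := by exact_mod_cast hd
  have key : ∀ j : ℕ, 1 ≤ j →
      ((j:ℝ) * ((j:ℝ) + d - 1)) / (2 * ((j:ℝ) + d/2)^2) < η j := by
    intro j hj
    induction j with
    | zero => omega
    | succ n ih =>
      rcases Nat.lt_or_ge n 1 with h | h
      · interval_cases n
        rw [hη1]
        push_cast
        rw [div_lt_div_iff₀ (by positivity) (by linarith)]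
        nlinarith
      · have hN : (1:ℝ) ≤ (n:ℝ) := by exact_mod_cast h
        have ihn := ih h
        have step := aux_step (d:ℝ) (n:ℝ) hd' hN
        have hrn := hrec n h
        push_cast
        rw [hrn]
        push_cast
        have hpos : 0 < (d:ℝ) + 2*(n:ℝ) := by linarith
        calc ((n:ℝ)+1) * ((n:ℝ)+1+d-1) / (2*((n:ℝ)+1+d/2)^2)
            ≤ ((n:ℝ)*((n:ℝ)+d-1))/(2*((n:ℝ)+d/2)^2) + 2/((d:ℝ)+2*(n:ℝ)) := by
              convert step using 3 <;> ring
          _ < η n + 2/((d:ℝ)+2*(n:ℝ)) := by linarith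
  have hηpos : ∀ j : ℕ, 1 ≤ j → 0 < η j := by
    intro j hj
    have hj' : (1:ℝ) ≤ (j:ℝ) := by exact_mod_cast hj
    have := key j hj
    have hnn : 0 ≤ ((j:ℝ) * ((j:ℝ) + d - 1)) / (2 * ((j:ℝ) + d/2)^2) := by
      apply div_nonneg (by nlinarith) (by positivity)
    linarith
  constructor
  · intro j hj
    have hj' : (1:ℝ) ≤ (j:ℝ) := by exact_mod_cast hj
    have hk := key j hj
    have hp := hηpos j hj
    rw [gt_iff_lt, div_lt_iff₀ (by positivity)]
    have := (div_lt_iff₀ (by positivity : (0:ℝ) < 2 * ((j:ℝ) + d/2)^2)).mp hk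
    nlinarith
  · intro j hj
    have hj' : (1:ℝ) ≤ (j:ℝ) := by exact_mod_cast hj
    set N := (j:ℝ)
    have hk := key j hj
    have hp := hηpos j hj
    have hC : (0:ℝ) < (d:ℝ) + 2*N := by linarith
    have hlam : (0:ℝ) < N * (N + d - 1) := by nlinarith
    have hlam1 : (0:ℝ) < (N+1) * (N+1+d-1) := by nlinarith
    rw [hrec j hj]
    push_cast
    rw [div_lt_div_iff₀ (by nlinarith) (by nlinarith)]
    have hkey' : N * (N + d - 1) < η j * (2 * (N + d/2)^2) :=
      (div_lt_iff₀ (by positivity)).mp hk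
    have he : (2/((d:ℝ)+2*N)) * ((d:ℝ)+2*N) = 2 := div_mul_cancel₀ 2 (ne_of_gt hC)
    have hepos : 0 < 2/((d:ℝ)+2*N) := by positivity
    have hmain : (2/((d:ℝ)+2*N)) * (N * (N + d - 1)) < η j * ((d:ℝ)+2*N) := by
      nlinarith [mul_lt_mul_of_pos_left hkey' hepos]
    nlinarith [hmain, hlam, hp]
end

section
/- Let $d \ge 2$ and $p \in (2, 2d/(d-2))$ (or $p>2$ if $d=2$), and set $m = \tfrac{p+2}{2p}$. Then $m$ satisfies $m_-(d,p) \le m \le m_+(d,p)$, where $m_\pm(d,p) = \tfrac{1}{(d+2)p}\big(dp + 2 \pm \sqrt{d(p-1)(2d - (d-2)p)}\big)$, and moreover $2/p \le m < 1$. -/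
theorem stmt_12 (d : ℕ) (hd : 2 ≤ d) (p : ℝ) (hp2 : 2 < p)
    (hpc : 3 ≤ d → p < 2 * d / ((d : ℝ) - 2)) :
    let m : ℝ := (p + 2) / (2 * p)
    (1 / ((d + 2) * p)) * ((d : ℝ) * p + 2 - Real.sqrt (d * (p - 1) * (2 * d - (d - 2) * p)))
      ≤ m ∧
    m ≤ (1 / ((d + 2) * p)) *
        ((d : ℝ) * p + 2 + Real.sqrt (d * (p - 1) * (2 * d - (d - 2) * p))) ∧
    2 / p ≤ m ∧ m < 1 := by
  intro m
  have hdR : (2:ℝ) ≤ (d:ℝ) := by exact_mod_cast hd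
  have hp0 : (0:ℝ) < p := by linarith
  have hq : (0:ℝ) < ((d:ℝ)+2)*p := by positivity
  set s := Real.sqrt ((d:ℝ) * (p - 1) * (2 * d - (d - 2) * p)) with hs
  have h1 : (0:ℝ) < 2 * d - ((d:ℝ) - 2) * p := by
    rcases eq_or_lt_of_le hd with h2 | h3
    · have : (d:ℝ) = 2 := by exact_mod_cast h2.symm
      rw [this]; linarith
    · have hd3 : 3 ≤ d := h3
      have hc := hpc hd3
      have hd2 : (0:ℝ) < (d:ℝ) - 2 := by
        have : (3:ℝ) ≤ (d:ℝ) := by exact_mod_cast hd3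
        linarith
      rw [lt_div_iff₀ hd2] at hc
      linarith
  have h2 : (0:ℝ) < (5 * d - 2) * p - 6 * d := by
    have h5 : (0:ℝ) < 5 * (d:ℝ) - 2 := by linarith
    nlinarith [mul_lt_mul_of_pos_left hp2 h5]
  have key : |((2*(d:ℝ) + 2*p - d*p)/2 : ℝ)| ≤ s := by
    rw [hs, ← Real.sqrt_sq_eq_abs]
    apply Real.sqrt_le_sqrt
    nlinarith [mul_pos h1 h2]
  obtain ⟨hA2, hA1⟩ := abs_le.mp key
  have hA2' : -((2*(d:ℝ) + 2*p - d*p)/2) ≤ s := by linarith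
  refine ⟨?_, ?_, ?_, ?_⟩
  · rw [show (1/(((d:ℝ)+2)*p)) * ((d:ℝ)*p+2-s) = ((d:ℝ)*p+2-s)/(((d:ℝ)+2)*p) from by ring]
    show _ ≤ (p + 2) / (2 * p)
    rw [div_le_div_iff₀ hq (by positivity)]
    nlinarith [mul_nonneg (by linarith : (0:ℝ) ≤ s + (2*(d:ℝ)+2*p-d*p)/2)
      (by linarith : (0:ℝ) ≤ 2*p)]
  · rw [show (1/(((d:ℝ)+2)*p)) * ((d:ℝ)*p+2+s) = ((d:ℝ)*p+2+s)/(((d:ℝ)+2)*p) from by ring]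
    show (p + 2) / (2 * p) ≤ _
    rw [div_le_div_iff₀ (by positivity) hq]
    nlinarith [mul_nonneg (by linarith : (0:ℝ) ≤ s - (2*(d:ℝ)+2*p-d*p)/2)
      (by linarith : (0:ℝ) ≤ 2*p)]
  · show 2 / p ≤ (p + 2) / (2 * p)
    rw [div_le_div_iff₀ hp0 (by positivity)]
    nlinarith
  · show (p + 2) / (2 * p) < 1
    rw [div_lt_one (by positivity)]
    linarith
end

section
/- For $p > 2$ and real $s \in (-1/2, 1/2)$: $(1+s)^{2/p} \le 1 + \tfrac{2s}{p} - (p-2)\tfrac{s^2}{p^2} + \tfrac23 (p-1)(p-2)\tfrac{s^3}{p^3}$. -/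
/-!
Let `a = 2 / p ∈ (0, 1)` and let `R₀(x) = P₃(x) - (1 + x) ^ a` be the remainder of the cubic Taylor
polynomial of `(1 + x) ^ a` at `0`. Its third derivative is
`R₃(x) = a (a - 1) (a - 2) (1 - (1 + x) ^ (a - 3))`, which has the sign of `x` because
`a (a - 1) (a - 2) ≥ 0` and `a - 3 < 0`. All `Rₖ` vanish at `0`, so going back up:
`R₂ ≥ 0`, hence `R₁` has the sign of `x`, hence `R₀ ≥ 0` on `(-1, ∞)`.
-/

open Set

lemma Convex.monotoneOn_of_hasDerivAt_nonneg {D : Set ℝ} (hD : Convex ℝ D) {f f' : ℝ → ℝ}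
    (hf : ∀ x ∈ D, HasDerivAt f (f' x) x) (hf' : ∀ x ∈ interior D, 0 ≤ f' x) :
    MonotoneOn f D :=
  monotoneOn_of_hasDerivWithinAt_nonneg hD
    (fun x hx ↦ (hf x hx).continuousAt.continuousWithinAt)
    (fun x hx ↦ (hf x (interior_subset hx)).hasDerivWithinAt) hf'

lemma Convex.antitoneOn_of_hasDerivAt_nonpos {D : Set ℝ} (hD : Convex ℝ D) {f f' : ℝ → ℝ}
    (hf : ∀ x ∈ D, HasDerivAt f (f' x) x) (hf' : ∀ x ∈ interior D, f' x ≤ 0) :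
    AntitoneOn f D :=
  antitoneOn_of_hasDerivWithinAt_nonpos hD
    (fun x hx ↦ (hf x hx).continuousAt.continuousWithinAt)
    (fun x hx ↦ (hf x (interior_subset hx)).hasDerivWithinAt) hf'

lemma Convex.mul_nonneg_of_hasDerivAt_nonneg {D : Set ℝ} (hD : Convex ℝ D) (hD₀ : 0 ∈ D)
    {f f' : ℝ → ℝ} (hf : ∀ x ∈ D, HasDerivAt f (f' x) x) (hf' : ∀ x ∈ D, 0 ≤ f' x)
    (hf₀ : f 0 = 0) : ∀ x ∈ D, 0 ≤ x * f x := by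
  have hmono := hD.monotoneOn_of_hasDerivAt_nonneg hf fun y hy ↦ hf' y (interior_subset hy)
  intro x hx
  rcases le_total 0 x with h | h
  · exact mul_nonneg h (hf₀ ▸ hmono hD₀ hx h)
  · exact mul_nonneg_of_nonpos_of_nonpos h (hf₀ ▸ hmono hx hD₀ h)

lemma Convex.nonneg_of_hasDerivAt_mul_nonneg {D : Set ℝ} (hD : Convex ℝ D) (hD₀ : 0 ∈ D)
    {f f' : ℝ → ℝ} (hf : ∀ x ∈ D, HasDerivAt f (f' x) x) (hf' : ∀ x ∈ D, 0 ≤ x * f' x)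
    (hf₀ : f 0 = 0) : ∀ x ∈ D, 0 ≤ f x := by
  intro x hx
  rcases le_total 0 x with h | h
  · have hmono : MonotoneOn f (D ∩ Ici 0) :=
      (hD.inter (convex_Ici 0)).monotoneOn_of_hasDerivAt_nonneg (fun y hy ↦ hf y hy.1)
        fun y hy ↦ by
          rw [interior_inter, interior_Ici] at hy
          exact nonneg_of_mul_nonneg_right (hf' y (interior_subset hy.1)) hy.2
    exact hf₀ ▸ hmono ⟨hD₀, self_mem_Ici⟩ ⟨hx, h⟩ h
  · have hanti : AntitoneOn f (D ∩ Iic 0) :=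
      (hD.inter (convex_Iic 0)).antitoneOn_of_hasDerivAt_nonpos (fun y hy ↦ hf y hy.1)
        fun y hy ↦ by
          rw [interior_inter, interior_Iic] at hy
          exact nonpos_of_mul_nonneg_right (hf' y (interior_subset hy.1)) hy.2
    exact hf₀ ▸ hanti ⟨hx, h⟩ ⟨hD₀, self_mem_Iic⟩ h

lemma hasDerivAt_one_add_rpow (b : ℝ) {x : ℝ} (hx : -1 < x) :
    HasDerivAt (fun y : ℝ ↦ (1 + y) ^ b) (b * (1 + x) ^ (b - 1)) x :=
  ((hasDerivAt_id' x).const_add 1).rpow_const (Or.inl (by linarith)) |>.congr_deriv (by ring)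

lemma mul_one_sub_one_add_rpow_nonneg {b x : ℝ} (hb : b ≤ 0) (hx : -1 < x) :
    0 ≤ x * (1 - (1 + x) ^ b) := by
  rcases le_total 0 x with h | h
  · exact mul_nonneg h (sub_nonneg.2 (Real.rpow_le_one_of_one_le_of_nonpos (by linarith) hb))
  · exact mul_nonneg_of_nonpos_of_nonpos h
      (sub_nonpos.2 (Real.one_le_rpow_of_pos_of_le_one_of_nonpos (by linarith) (by linarith) hb))

theorem one_add_rpow_le_taylor_cubic {a t : ℝ} (ha₀ : 0 ≤ a) (ha₁ : a ≤ 1) (ht : -1 < t) :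
    (1 + t) ^ a ≤
      1 + a * t + a * (a - 1) / 2 * t ^ 2 + a * (a - 1) * (a - 2) / 6 * t ^ 3 := by
  set c := a * (a - 1) * (a - 2)
  have hc : 0 ≤ c :=
    mul_nonneg_of_nonpos_of_nonpos (mul_nonpos_of_nonneg_of_nonpos ha₀ (by linarith))
      (by linarith)
  have hD : Convex ℝ (Ioi (-1 : ℝ)) := convex_Ioi _
  have hD₀ : (0 : ℝ) ∈ Ioi (-1) := by norm_num
  -- `hRₖ : Rₖ' = Rₖ₊₁` in the notation of the header.
  have hR₂ : ∀ x ∈ Ioi (-1 : ℝ), HasDerivAt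
      (fun y ↦ a * (a - 1) + c * y - a * (a - 1) * (1 + y) ^ (a - 2))
      (c * (1 - (1 + x) ^ (a - 3))) x := fun x hx ↦ by
    refine ((((hasDerivAt_id' x).const_mul c).const_add _).sub
      ((hasDerivAt_one_add_rpow (a - 2) hx).const_mul (a * (a - 1)))).congr_deriv ?_
    rw [show a - 2 - 1 = a - 3 by ring]
    ring
  have hR₁ : ∀ x ∈ Ioi (-1 : ℝ), HasDerivAt
      (fun y ↦ a + a * (a - 1) * y + c / 2 * y ^ 2 - a * (1 + y) ^ (a - 1))
      (a * (a - 1) + c * x - a * (a - 1) * (1 + x) ^ (a - 2)) x := fun x hx ↦ by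
    refine (((((hasDerivAt_id' x).const_mul _).const_add a).add
      ((hasDerivAt_pow 2 x).const_mul (c / 2))).sub
      ((hasDerivAt_one_add_rpow (a - 1) hx).const_mul a)).congr_deriv ?_
    rw [show a - 1 - 1 = a - 2 by ring]
    ring
  have hR₀ : ∀ x ∈ Ioi (-1 : ℝ), HasDerivAt
      (fun y ↦ 1 + a * y + a * (a - 1) / 2 * y ^ 2 + c / 6 * y ^ 3 - (1 + y) ^ a)
      (a + a * (a - 1) * x + c / 2 * x ^ 2 - a * (1 + x) ^ (a - 1)) x := fun x hx ↦ by
    refine ((((((hasDerivAt_id' x).const_mul a).const_add 1).add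
      ((hasDerivAt_pow 2 x).const_mul (a * (a - 1) / 2))).add
      ((hasDerivAt_pow 3 x).const_mul (c / 6))).sub
      (hasDerivAt_one_add_rpow a hx)).congr_deriv ?_
    ring
  have hR₃_sign : ∀ x ∈ Ioi (-1 : ℝ), 0 ≤ x * (c * (1 - (1 + x) ^ (a - 3))) := fun x hx ↦ by
    rw [mul_left_comm]
    exact mul_nonneg hc (mul_one_sub_one_add_rpow_nonneg (by linarith) hx)
  have hR₂_nonneg := hD.nonneg_of_hasDerivAt_mul_nonneg hD₀ hR₂ hR₃_sign (by simp)
  have hR₁_sign := hD.mul_nonneg_of_hasDerivAt_nonneg hD₀ hR₁ hR₂_nonneg (by simp)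
  have hR₀_nonneg := hD.nonneg_of_hasDerivAt_mul_nonneg hD₀ hR₀ hR₁_sign (by simp) t ht
  linarith

theorem stmt_17_general (p s : ℝ) (hp : 2 < p) (hs1 : -(1/2) < s) :
    (1 + s) ^ (2 / p) ≤
      1 + 2 * s / p - (p - 2) * s ^ 2 / p ^ 2 + (2 / 3) * (p - 1) * (p - 2) * s ^ 3 / p ^ 3 := by
  have hp₀ : 0 < p := by linarith
  have h := one_add_rpow_le_taylor_cubic (a := 2 / p) (by positivity)
    ((div_le_one hp₀).2 hp.le) (by linarith : -1 < s)
  convert h using 1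
  field_simp
  ring

theorem stmt_17 (p s : ℝ) (hp : 2 < p) (hs1 : -(1/2) < s) (hs2 : s < 1/2) :
    (1 + s) ^ (2 / p) ≤
      1 + 2 * s / p - (p - 2) * s ^ 2 / p ^ 2 + (2 / 3) * (p - 1) * (p - 2) * s ^ 3 / p ^ 3 :=
  stmt_17_general p s hp hs1
end

section
/- Let $p \in (2,4]$. For all reals $u \ge 0$ and $r$ with $u + r \ge 0$: $(u+r)^p \le u^p + p u^{p-1} r + \tfrac{p}{2}(p-1) u^{p-2} r^2 + \sum_{2 < k < p,\ k \in \mathbb{N}} \tfrac{\Gamma(p+1)}{\Gamma(k+1)\Gamma(p-k+1)} u^{p-k} |r|^k + |r|^p$. -/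
open scoped Classical

/-!
Write `T_n(p, a, b) = ∑_{k ≤ n} C(p, k) a^(p-k) b^k`. Since `k C(p, k) = p C(p-1, k-1)`, the
derivative in `b` of `T_{n+1}(p, a, b) + b^p` is `p (T_n(p-1, a, b) + b^(p-1))`, so comparing
derivatives on `[0, b]` proves `(a + b)^p ≤ T_n(p, a, b) + b^p` for `p ∈ (n, n+1]` by induction
on `n`, starting from the subadditivity of `b ↦ b^p` for `p ≤ 1`. For `r = -t < 0` the same
comparison in `t` reduces to the bound at exponent `p - 1` and base `a - t`, after which the
coefficients of `T_n` are increased by replacing `a - t` with `a`.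
-/

open Real Finset

noncomputable def realChoose (p : ℝ) (k : ℕ) : ℝ :=
  Gamma (p + 1) / (Gamma ((k : ℝ) + 1) * Gamma (p - k + 1))

lemma realChoose_zero {p : ℝ} (hp : -1 < p) : realChoose p 0 = 1 := by
  have : Gamma (p + 1) ≠ 0 := (Gamma_pos_of_pos (by linarith)).ne'
  simp [realChoose, this]

lemma realChoose_succ {p : ℝ} (hp : p ≠ 0) (k : ℕ) :
    realChoose p (k + 1) = p / (k + 1) * realChoose (p - 1) k := by
  have hk : (k : ℝ) + 1 ≠ 0 := by positivity
  simp only [realChoose, Nat.cast_succ, Gamma_add_one hp, Gamma_add_one hk,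
    show p - (k + 1) + 1 = p - 1 - k + 1 by ring, sub_add_cancel, div_eq_mul_inv, mul_inv]
  ring

lemma realChoose_nonneg {p : ℝ} {k : ℕ} (hk : (k : ℝ) ≤ p) : 0 ≤ realChoose p k := by
  unfold realChoose
  have := Gamma_nonneg_of_nonneg (s := p + 1) (by linarith [k.cast_nonneg (α := ℝ)])
  have := Gamma_nonneg_of_nonneg (s := p - k + 1) (by linarith)
  have := Gamma_nonneg_of_nonneg (s := (k : ℝ) + 1) (by positivity)
  positivity

lemma realChoose_one {p : ℝ} (hp : 0 < p) : realChoose p 1 = p := by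
  rw [realChoose_succ hp.ne', realChoose_zero (by linarith)]
  simp

lemma realChoose_two {p : ℝ} (hp : 1 < p) : realChoose p 2 = p / 2 * (p - 1) := by
  rw [realChoose_succ (by positivity), realChoose_one (by linarith)]
  norm_num

noncomputable def binomTrunc (n : ℕ) (p a b : ℝ) : ℝ :=
  ∑ k ∈ range (n + 1), realChoose p k * a ^ (p - k) * b ^ k

lemma binomTrunc_zero_right (n : ℕ) {p : ℝ} (hp : -1 < p) (a : ℝ) :
    binomTrunc n p a 0 = a ^ p := by
  simp [binomTrunc, sum_range_succ', realChoose_zero hp]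

lemma binomTrunc_zero (p a b : ℝ) (hp : -1 < p) : binomTrunc 0 p a b = a ^ p := by
  simp [binomTrunc, realChoose_zero hp]

lemma hasDerivAt_binomTrunc (n : ℕ) {p : ℝ} (hp : p ≠ 0) (a x : ℝ) :
    HasDerivAt (binomTrunc (n + 1) p a) (p * binomTrunc n (p - 1) a x) x := by
  have hterm (k : ℕ) : HasDerivAt (fun b => realChoose p k * a ^ (p - k) * b ^ k)
      (realChoose p k * a ^ (p - k) * (k * x ^ (k - 1))) x :=
    (hasDerivAt_pow k x).const_mul _
  have hsum := HasDerivAt.fun_sum (u := range (n + 2)) fun k _ => hterm k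
  refine hsum.congr_deriv ?_
  rw [sum_range_succ', binomTrunc, mul_sum]
  simp only [CharP.cast_eq_zero, zero_mul, mul_zero, add_zero]
  refine sum_congr rfl fun j _ => ?_
  rw [realChoose_succ hp, Nat.add_sub_cancel]
  push_cast
  field_simp
  ring_nf

lemma binomTrunc_sub_rpow_le_of_le {n : ℕ} {q : ℝ} (hn : (n : ℝ) ≤ q) (hq : -1 < q) {c a t : ℝ}
    (hc : 0 ≤ c) (hca : c ≤ a) (ht : 0 ≤ t) :
    binomTrunc n q c t - c ^ q ≤ binomTrunc n q a t - a ^ q := by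
  simp only [binomTrunc, sum_range_succ', realChoose_zero hq]
  simp only [CharP.cast_eq_zero, sub_zero, pow_zero, one_mul, mul_one, add_sub_cancel_right]
  refine sum_le_sum fun j hj => ?_
  have hj : ((j + 1 : ℕ) : ℝ) ≤ n := by exact_mod_cast mem_range.1 hj
  have := realChoose_nonneg (hj.trans hn)
  gcongr
  linarith

lemma le_of_hasDerivAt_le {f g f' g' : ℝ → ℝ} {a b : ℝ} (hab : a ≤ b)
    (hf : ∀ x ∈ Set.Icc a b, HasDerivAt f (f' x) x)
    (hg : ∀ x ∈ Set.Icc a b, HasDerivAt g (g' x) x)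
    (hle : ∀ x ∈ Set.Ico a b, f' x ≤ g' x) (ha : f a ≤ g a) : f b ≤ g b :=
  image_le_of_deriv_right_le_deriv_boundary
    (fun x hx => (hf x hx).continuousAt.continuousWithinAt)
    (fun x hx => (hf x (Set.Ico_subset_Icc_self hx)).hasDerivWithinAt) ha
    (fun x hx => (hg x hx).continuousAt.continuousWithinAt)
    (fun x hx => (hg x (Set.Ico_subset_Icc_self hx)).hasDerivWithinAt) hle ⟨hab, le_rfl⟩

theorem rpow_add_le_binomTrunc_add_rpow (n : ℕ) {p : ℝ} (hnp : n < p) (hpn : p ≤ n + 1)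
    {a b : ℝ} (ha : 0 ≤ a) (hb : 0 ≤ b) : (a + b) ^ p ≤ binomTrunc n p a b + b ^ p := by
  induction n generalizing p b with
  | zero =>
    rw [binomTrunc_zero _ _ _ (by linarith)]
    exact rpow_add_le_add_rpow ha hb (by linarith) (by simpa using hpn)
  | succ n ih =>
    push_cast at hnp hpn
    have hp : 1 ≤ p := by linarith [n.cast_nonneg (α := ℝ)]
    refine le_of_hasDerivAt_le hb (f' := fun x => p * (a + x) ^ (p - 1))
      (g' := fun x => p * binomTrunc n (p - 1) a x + p * x ^ (p - 1))
      (fun x _ => by simpa using ((hasDerivAt_id x).const_add a).rpow_const (Or.inr hp))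
      (fun x _ => (hasDerivAt_binomTrunc n (by positivity) a x).add
        (hasDerivAt_rpow_const (Or.inr hp)))
      (fun x hx => ?_) ?_
    · rw [← mul_add]
      exact mul_le_mul_of_nonneg_left (ih (by linarith) (by linarith) hx.1) (by positivity)
    · rw [Pi.add_apply, binomTrunc_zero_right _ (by linarith), zero_rpow (by positivity), add_zero,
        add_zero]

-- `(a - t)^p ≤ T_{n+1}(p, a, t) + t^p` with the sign of the linear term of `T_{n+1}` flipped.
theorem rpow_sub_add_le_binomTrunc_add_rpow (n : ℕ) {p : ℝ} (hnp : n + 1 < p) (hpn : p ≤ n + 2)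
    {a t : ℝ} (ht : 0 ≤ t) (hta : t ≤ a) :
    (a - t) ^ p + 2 * p * a ^ (p - 1) * t ≤ binomTrunc (n + 1) p a t + t ^ p := by
  have hp : 1 ≤ p := by linarith [n.cast_nonneg (α := ℝ)]
  refine le_of_hasDerivAt_le ht (f := fun x => (a - x) ^ p + 2 * p * a ^ (p - 1) * x)
    (g := fun x => binomTrunc (n + 1) p a x + x ^ p)
    (f' := fun x => -(p * (a - x) ^ (p - 1)) + 2 * p * a ^ (p - 1))
    (g' := fun x => p * binomTrunc n (p - 1) a x + p * x ^ (p - 1))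
    (fun x _ => ?_)
    (fun x _ => (hasDerivAt_binomTrunc n (by positivity) a x).fun_add
      (hasDerivAt_rpow_const (Or.inr hp)))
    (fun x hx => ?_) ?_
  · have h := (((hasDerivAt_id x).const_sub a).rpow_const (p := p) (Or.inr hp)).fun_add
      ((hasDerivAt_id x).const_mul (2 * p * a ^ (p - 1)))
    simpa using h
  · have hax : 0 ≤ a - x := by linarith [hx.2]
    have hpos := rpow_add_le_binomTrunc_add_rpow n (p := p - 1) (by linarith) (by linarith)
      hax hx.1
    rw [sub_add_cancel] at hpos
    have hmono := binomTrunc_sub_rpow_le_of_le (n := n) (q := p - 1) (a := a) (by linarith)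
      (by linarith) hax (by linarith [hx.1]) hx.1
    have key : 2 * a ^ (p - 1) ≤ (a - x) ^ (p - 1) + binomTrunc n (p - 1) a x + x ^ (p - 1) := by
      linarith
    have := mul_le_mul_of_nonneg_left key (by positivity : (0 : ℝ) ≤ p)
    linarith
  · simp only [sub_zero, mul_zero, add_zero]
    rw [binomTrunc_zero_right _ (by linarith), zero_rpow (by positivity), add_zero]

lemma binomTrunc_succ_eq (n : ℕ) {p : ℝ} (hp : 0 < p) (a b : ℝ) :
    binomTrunc (n + 1) p a b = a ^ p + p * a ^ (p - 1) * b
      + ∑ k ∈ Ico 2 (n + 2), realChoose p k * a ^ (p - k) * b ^ k := by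
  rw [binomTrunc, ← sum_range_add_sum_Ico _ (by omega : 2 ≤ n + 2)]
  simp [sum_range_succ, realChoose_zero (by linarith : -1 < p), realChoose_one hp]

theorem rpow_add_le_sum_abs_add_abs_rpow (n : ℕ) {p : ℝ} (hnp : n + 1 < p) (hpn : p ≤ n + 2)
    {u r : ℝ} (hu : 0 ≤ u) (hur : 0 ≤ u + r) :
    (u + r) ^ p ≤ u ^ p + p * u ^ (p - 1) * r
      + ∑ k ∈ Ico 2 (n + 2), realChoose p k * u ^ (p - k) * |r| ^ k + |r| ^ p := by
  have hp : 0 < p := by linarith [n.cast_nonneg (α := ℝ)]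
  rcases le_or_gt 0 r with hr | hr
  · have h := rpow_add_le_binomTrunc_add_rpow (n + 1) (p := p) (by push_cast; linarith)
      (by push_cast; linarith) hu hr
    rwa [abs_of_nonneg hr, ← binomTrunc_succ_eq n hp]
  · have h := rpow_sub_add_le_binomTrunc_add_rpow n hnp hpn (by linarith : 0 ≤ -r)
      (by linarith : -r ≤ u)
    rw [binomTrunc_succ_eq n hp, sub_neg_eq_add] at h
    rw [abs_of_neg hr]
    linarith

theorem stmt_18 (p : ℝ) (hp1 : 2 < p) (hp2 : p ≤ 4) (u r : ℝ)
    (hu : 0 ≤ u) (hur : 0 ≤ u + r) :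
    (u + r) ^ p ≤
      u ^ p + p * u ^ (p - 1) * r + (p / 2) * (p - 1) * u ^ (p - 2) * r ^ 2
        -- the sum over natural numbers k with 2 < k < p (here k can only be 3)
        + (∑ k ∈ Finset.Ioo (2 : ℕ) 4, if (k : ℝ) < p then
            Real.Gamma (p + 1) / (Real.Gamma ((k : ℝ) + 1) * Real.Gamma (p - k + 1))
              * u ^ (p - k) * |r| ^ (k : ℝ)
          else 0)
        + |r| ^ p := by
  rw [show Ioo 2 4 = {3} from rfl, sum_singleton, ← realChoose, rpow_natCast]
  have hquad : realChoose p 2 = p / 2 * (p - 1) := realChoose_two (by linarith)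
  rcases le_or_gt p 3 with hp3 | hp3
  · have h := rpow_add_le_sum_abs_add_abs_rpow 1 (p := p) (by norm_num; linarith)
      (by norm_num; linarith) hu hur
    simp only [Nat.reduceAdd, Nat.Ico_succ_singleton, sum_singleton, hquad, Nat.cast_ofNat,
      sq_abs] at h
    rw [if_neg (by push_cast; linarith)]
    linarith
  · have h := rpow_add_le_sum_abs_add_abs_rpow 2 (p := p) (by norm_num; linarith)
      (by norm_num; linarith) hu hur
    simp only [Nat.reduceAdd, Nat.reduceLeDiff, sum_Ico_succ_top, Nat.Ico_succ_singleton,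
      sum_singleton, hquad, Nat.cast_ofNat, sq_abs] at h
    rw [if_pos (by push_cast; linarith)]
    linarith
end
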